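/- Suppose ℬ, ℬ' ⊆ [n] satisfy α(1−β)n ≤ |ℬ'| ≤ α(1+β)n, |ℬ∩ℬ'| < α²(1+β)n, and |ℬ'\ℬ| > α(1−α)(1−β)n for constants 0 < α, β < 1. Then for any y ∈ 𝒴ⁿ and any distribution W₀ on 𝒴, V(P̂_y(·|ℬ'), W₀) ≥ ((1−α)(1−β)/(1+β))·V(P̂_y(·|ℬ'\ℬ), W₀) − 2α(1+β)/(1−β). -/
import Mathlib


/-- Total variation distance between two (finitely supported) distributions. -/
noncomputable def tv {𝒴 : Type*} [Fintype 𝒴] (μ ν : 𝒴 → ℝ) : ℝ :=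
  (1 / 2) * ∑ y, |μ y - ν y|

/-- Empirical distribution of `y` restricted to the index set `S`. -/
noncomputable def emp {n : ℕ} {𝒴 : Type*} [DecidableEq 𝒴]
    (y : Fin n → 𝒴) (S : Finset (Fin n)) (a : 𝒴) : ℝ :=
  ((S.filter fun i => y i = a).card : ℝ) / (S.card : ℝ)

lemma tv_nonneg' {𝒴 : Type*} [Fintype 𝒴] (μ ν : 𝒴 → ℝ) : 0 ≤ tv μ ν := by
  unfold tv
  positivity

theorem tv_emp_lower_bound_quantitative {n : ℕ} {𝒴 : Type*} [Fintype 𝒴] [DecidableEq 𝒴]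
    (α β : ℝ) (hα0 : 0 < α) (hα1 : α < 1) (hβ0 : 0 < β) (hβ1 : β < 1)
    (hn : 0 < n) (B B' : Finset (Fin n))
    (hlow : α * (1 - β) * n ≤ (B'.card : ℝ))
    (hhigh : (B'.card : ℝ) ≤ α * (1 + β) * n)
    (hcap : ((B ∩ B').card : ℝ) < α ^ 2 * (1 + β) * n)
    (hdiff : α * (1 - α) * (1 - β) * n < ((B' \ B).card : ℝ))
    (y : Fin n → 𝒴) (W₀ : 𝒴 → ℝ) (hW0 : ∀ a, 0 ≤ W₀ a) (hW1 : ∑ a, W₀ a = 1) :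
    tv (emp y B') W₀ ≥
      ((1 - α) * (1 - β) / (1 + β)) * tv (emp y (B' \ B)) W₀
        - 2 * α * (1 + β) / (1 - β) := by
  classical
  have hn' : (0:ℝ) < n := by exact_mod_cast hn
  set s : ℝ := (B'.card : ℝ) with hs_def
  set t : ℝ := ((B' \ B).card : ℝ) with ht_def
  set u : ℝ := ((B ∩ B').card : ℝ) with hu_def
  clear_value s t u
  have hs : 0 < s := lt_of_lt_of_le (mul_pos (mul_pos hα0 (by linarith)) hn') hlow
  have ht : 0 < t := lt_of_le_of_lt (le_of_lt (mul_pos (mul_pos (mul_pos hα0 (by linarith)) (by linarith)) hn')) hdiff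
  have hu : 0 ≤ u := by rw [hu_def]; positivity
  have hstu : s = t + u := by
    have hc : (B' ∩ B).card + (B' \ B).card = B'.card :=
      Finset.card_inter_add_card_sdiff B' B
    rw [hs_def, ht_def, hu_def, Finset.inter_comm B B', ← hc]
    push_cast
    ring
  have hts0 : t + u ≠ 0 := by rw [← hstu]; exact hs.ne'
  -- count decomposition
  have hcnt : ∀ a : 𝒴, ((B'.filter fun i => y i = a).card : ℝ)
      = ((B' \ B).filter fun i => y i = a).card + ((B ∩ B').filter fun i => y i = a).card := by
    intro a
    rw [Finset.inter_comm B B']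
    have hdisj : Disjoint ((B' \ B).filter fun i => y i = a)
        ((B' ∩ B).filter fun i => y i = a) :=
      (Finset.disjoint_sdiff_inter B' B).mono (Finset.filter_subset _ _)
        (Finset.filter_subset _ _)
    rw [← Nat.cast_add, ← Finset.card_union_of_disjoint hdisj, ← Finset.filter_union,
      Finset.sdiff_union_inter]
  have ht_emp : ∀ a, t * emp y (B' \ B) a = ((B' \ B).filter fun i => y i = a).card := by
    intro a
    rw [emp, ← ht_def]
    field_simp
  have hu_emp : ∀ a, u * emp y (B ∩ B') a = ((B ∩ B').filter fun i => y i = a).card := by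
    intro a
    rw [emp, ← hu_def]
    rcases eq_or_lt_of_le hu with h0 | h0
    · have hc0 : (B ∩ B').card = 0 := by
        rw [hu_def] at h0; exact_mod_cast h0.symm
      have : ((B ∩ B').filter fun i => y i = a).card = 0 :=
        Nat.le_zero.mp (hc0 ▸ Finset.card_filter_le _ _)
      rw [this, ← h0]
      simp
    · field_simp
  -- pointwise decomposition of the difference
  have hdecomp : ∀ a, emp y B' a - W₀ a
      = (t/s) * (emp y (B' \ B) a - W₀ a) + (u/s) * (emp y (B ∩ B') a - W₀ a) := by
    intro a
    have h1 := ht_emp a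
    have h2 := hu_emp a
    rw [emp, ← hs_def, hcnt a, ← h1, ← h2, hstu]
    field_simp
    ring
  -- pointwise lower bound
  have key : ∀ a, (t/s) * |emp y (B' \ B) a - W₀ a| - (u/s) * |emp y (B ∩ B') a - W₀ a|
      ≤ |emp y B' a - W₀ a| := by
    intro a
    rw [hdecomp a]
    set X := (t/s) * (emp y (B' \ B) a - W₀ a)
    set Y := (u/s) * (emp y (B ∩ B') a - W₀ a)
    have h1 : |X| - |Y| ≤ |X + Y| := by
      have := abs_sub_abs_le_abs_sub X (-Y)
      simp only [abs_neg, sub_neg_eq_add] at this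
      linarith
    have h2 : |X| = (t/s) * |emp y (B' \ B) a - W₀ a| := by
      rw [abs_mul, abs_of_nonneg (by positivity : (0:ℝ) ≤ t/s)]
    have h3 : |Y| = (u/s) * |emp y (B ∩ B') a - W₀ a| := by
      rw [abs_mul, abs_of_nonneg (by positivity : (0:ℝ) ≤ u/s)]
    linarith
  have hsum : ∑ a, ((t/s) * |emp y (B' \ B) a - W₀ a| - (u/s) * |emp y (B ∩ B') a - W₀ a|)
      ≤ ∑ a, |emp y B' a - W₀ a| :=
    Finset.sum_le_sum fun a _ => key a
  rw [Finset.sum_sub_distrib, ← Finset.mul_sum, ← Finset.mul_sum] at hsum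
  -- bound on the middle term
  have hCsum : ∑ a, |emp y (B ∩ B') a - W₀ a| ≤ 2 := by
    have h1 : ∀ a, |emp y (B ∩ B') a - W₀ a| ≤ emp y (B ∩ B') a + W₀ a := by
      intro a
      have hnn : 0 ≤ emp y (B ∩ B') a := by rw [emp]; positivity
      rw [abs_sub_le_iff]
      constructor <;> nlinarith [hW0 a]
    have h2 : ∑ a, emp y (B ∩ B') a ≤ 1 := by
      have hcard : (B ∩ B').card = ∑ a : 𝒴, ((B ∩ B').filter fun i => y i = a).card :=
        Finset.card_eq_sum_card_fiberwise (fun x _ => Finset.mem_univ (y x))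
      have : ∑ a, emp y (B ∩ B') a = u / u := by
        simp only [emp, ← hu_def, ← Finset.sum_div]
        congr 1
        rw [hu_def, hcard]
        push_cast
        ring
      rw [this]
      rcases eq_or_lt_of_le hu with h0 | h0
      · rw [← h0]; norm_num
      · rw [div_self h0.ne']
    calc ∑ a, |emp y (B ∩ B') a - W₀ a| ≤ ∑ a, (emp y (B ∩ B') a + W₀ a) :=
          Finset.sum_le_sum fun a _ => h1 a
      _ = (∑ a, emp y (B ∩ B') a) + ∑ a, W₀ a := Finset.sum_add_distrib
      _ ≤ 1 + 1 := by rw [hW1]; linarith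
      _ = 2 := by norm_num
  -- ratio bounds
  have hts : (1 - α) * (1 - β) / (1 + β) ≤ t / s := by
    rw [div_le_div_iff₀ (by linarith) hs]
    have h1 : (1-α)*(1-β) * s ≤ (1-α)*(1-β) * (α * (1 + β) * n) :=
      mul_le_mul_of_nonneg_left hhigh (mul_nonneg (by linarith) (by linarith))
    have h2 : α * (1 - α) * (1 - β) * n * (1+β) < t * (1+β) :=
      mul_lt_mul_of_pos_right hdiff (by linarith)
    linarith only [h1, h2]
  have hus : u / s ≤ α * (1 + β) / (1 - β) := by
    rw [div_le_div_iff₀ hs (by linarith)]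
    have h1 : α*(1+β) * (α * (1 - β) * n) ≤ α*(1+β) * s :=
      mul_le_mul_of_nonneg_left hlow (mul_nonneg (by linarith) (by linarith))
    have h2 : u * (1-β) < α ^ 2 * (1 + β) * n * (1-β) :=
      mul_lt_mul_of_pos_right hcap (by linarith)
    linarith only [h1, h2]
  -- combine
  have hT := tv_nonneg' (emp y (B' \ B)) W₀
  have h2tv : ∑ a, |emp y B' a - W₀ a| = 2 * tv (emp y B') W₀ := by
    unfold tv; ring
  have h2tvT : ∑ a, |emp y (B' \ B) a - W₀ a| = 2 * tv (emp y (B' \ B)) W₀ := by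
    unfold tv; ring
  rw [h2tv, h2tvT] at hsum
  have hmid : (u/s) * ∑ a, |emp y (B ∩ B') a - W₀ a| ≤ (u/s) * 2 :=
    mul_le_mul_of_nonneg_left hCsum (by positivity)
  have hstep : (t/s) * tv (emp y (B' \ B)) W₀ - (u/s) ≤ tv (emp y B') W₀ := by
    linarith only [hsum, hmid]
  have hfin : ((1 - α) * (1 - β) / (1 + β)) * tv (emp y (B' \ B)) W₀
      ≤ (t/s) * tv (emp y (B' \ B)) W₀ :=
    mul_le_mul_of_nonneg_right hts hT
  have hd2 : u / s ≤ 2 * α * (1 + β) / (1 - β) := by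
    have h9 : α * (1 + β) / (1 - β) ≤ 2 * α * (1 + β) / (1 - β) := by
      have hpos : (0:ℝ) < 1 - β := by linarith
      rw [div_le_div_iff₀ hpos hpos]
      have := mul_pos (mul_pos hα0 (show (0:ℝ) < 1+β by linarith)) hpos
      linarith only [this]
    linarith only [hus, h9]
  linarith only [hstep, hfin, hd2]
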